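/- Suppose the polarity $\phi : \tilde A \to A^{**}$ is injective and there exists $w_0 \in \tilde A$ with $\phi(w_0) = \iota(1_A)$. Then $w * w_0 = w(1_A)\, w_0 = w_0 * w$ for all $w \in A^*$, $\mathrm{tr}(w * w_0) = w(1_A)\, w_0(1_A)$ for all $w \in A^*$, and $w_0(1_A) = 1$; hence $w_0$ is a normalized invariant integral on $G$ and $G$ is linearly semisimple. -/

import Mathlib

open TensorProduct

noncomputable section

variable {K : Type} [Field K] {A : Type} [CommRing A] [HopfAlgebra K A]

/-- Convolution product on the dual of a coalgebra:
`(w * w') a = ∑ w a₍₁₎ * w' a₍₂₎`. -/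
def conv (w w' : Module.Dual K A) : Module.Dual K A :=
  (LinearMap.mul' K K).comp ((TensorProduct.map w w').comp (Coalgebra.comul (R := K)))

/-- Left convolution by `u`, as a linear endomorphism of the dual. -/
def convL (u : Module.Dual K A) : Module.Dual K A →ₗ[K] Module.Dual K A where
  toFun := conv u
  map_add' x y := by
    unfold conv
    rw [TensorProduct.map_add_right, LinearMap.add_comp, LinearMap.comp_add]
  map_smul' c x := by
    show (LinearMap.mul' K K).comp ((TensorProduct.map u (c • x)).comp (Coalgebra.comul (R := K))) =
      c • (LinearMap.mul' K K).comp ((TensorProduct.map u x).comp (Coalgebra.comul (R := K)))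
    rw [TensorProduct.map_smul_right, LinearMap.smul_comp, LinearMap.comp_smul]

/-- The span of `{u * w' : w' ∈ A*}`. -/
def rightOrbit (u : Module.Dual K A) : Submodule K (Module.Dual K A) :=
  Submodule.span K {x | ∃ w', x = conv u w'}

lemma rightOrbit_mapsTo (u : Module.Dual K A) :
    ∀ x ∈ rightOrbit u, convL u x ∈ rightOrbit u := by
  intro x hx
  have h : Submodule.map (convL u) (rightOrbit u) ≤ rightOrbit u := by
    rw [rightOrbit, Submodule.map_span]
    apply Submodule.span_mono
    rintro y ⟨x, ⟨w', rfl⟩, rfl⟩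
    exact ⟨conv u w', rfl⟩
  exact h ⟨x, hx, rfl⟩

/-- The trace of the finite-rank operator "left convolution by `u`", computed as the trace of
its restriction to the finite-dimensional invariant subspace `u * A*` containing its image. -/
def convTrace (u : Module.Dual K A) : K :=
  LinearMap.trace K (rightOrbit u) ((convL u).restrict (rightOrbit_mapsTo u))

/-- The span of `{w₁ * w * w₂ : w₁, w₂ ∈ A*}`. -/
def twoSidedOrbit (w : Module.Dual K A) : Submodule K (Module.Dual K A) :=
  Submodule.span K {x | ∃ w₁ w₂, x = conv w₁ (conv w w₂)}

/-- `Ã = {w ∈ A* : dim_K (A* * w * A*) < ∞}`. -/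
def tildeSet (K : Type) [Field K] (A : Type) [CommRing A] [HopfAlgebra K A] :
    Set (Module.Dual K A) :=
  {w | FiniteDimensional K (twoSidedOrbit w)}

/-- A normalized invariant integral on `G = Spec A`:  `w_G(1) = 1` and
`w * w_G = w(1) w_G = w_G * w` for all `w ∈ A*`. -/
def IsNormalizedIntegral (wG : Module.Dual K A) : Prop :=
  wG 1 = 1 ∧ ∀ w : Module.Dual K A, conv w wG = w 1 • wG ∧ conv wG w = w 1 • wG

/-! The trace form is symmetric on `Ã`: for `u ∈ Ã`, both `tr(u * w)` and `tr(w * u)` are traces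
of products of `L_u` and `L_w` on the finite-dimensional space `A* * u * A*`, taken in the two
orders. Hence for `u = w * w₀` and for `u = w₀ * w` the functional `φ(u)` is `w(1) ι(1)`,
which is also `φ(w(1) w₀)`, and injectivity of `φ` gives two-sided invariance of `w₀`. Right
invariance makes `w₀ * A*` the line `K w₀`, on which `L_{w₀}` acts as `w₀(1)`, so
`1 = tr(w₀) = w₀(1)`. -/

open WithConv

section ConvolutionAlgebra

theorem conv_eq_ofConv_mul (w w' : Module.Dual K A) :
    conv w w' = ofConv (toConv w * toConv w') :=
  rfl

theorem conv_assoc (u v w : Module.Dual K A) : conv (conv u v) w = conv u (conv v w) :=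
  congrArg ofConv (mul_assoc (toConv u) (toConv v) (toConv w))

theorem ofConv_one_eq_counit : ofConv (1 : WithConv (Module.Dual K A)) = Coalgebra.counit := by
  ext a
  simp

theorem counit_conv (w : Module.Dual K A) : conv Coalgebra.counit w = w := by
  rw [conv_eq_ofConv_mul, ← ofConv_one_eq_counit, toConv_ofConv, one_mul, ofConv_toConv]

theorem conv_counit (w : Module.Dual K A) : conv w Coalgebra.counit = w := by
  rw [conv_eq_ofConv_mul, ← ofConv_one_eq_counit, toConv_ofConv, mul_one, ofConv_toConv]

theorem conv_smul (c : K) (w w' : Module.Dual K A) : conv w (c • w') = c • conv w w' :=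
  congrArg ofConv (mul_smul_comm c (toConv w) (toConv w'))

theorem smul_conv (c : K) (w w' : Module.Dual K A) : conv (c • w) w' = c • conv w w' :=
  congrArg ofConv (smul_mul_assoc c (toConv w) (toConv w'))

theorem conv_zero (w : Module.Dual K A) : conv w 0 = 0 :=
  congrArg ofConv (mul_zero (toConv w))

theorem zero_conv (w : Module.Dual K A) : conv 0 w = 0 :=
  congrArg ofConv (zero_mul (toConv w))

theorem conv_add (w x y : Module.Dual K A) : conv w (x + y) = conv w x + conv w y :=
  congrArg ofConv (mul_add (toConv w) (toConv x) (toConv y))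

theorem add_conv (x y w : Module.Dual K A) : conv (x + y) w = conv x w + conv y w :=
  congrArg ofConv (add_mul (toConv x) (toConv y) (toConv w))

theorem conv_apply_one (w w' : Module.Dual K A) : conv w w' 1 = w 1 * w' 1 := by
  simp [conv, Bialgebra.comul_one, Algebra.TensorProduct.one_def]

end ConvolutionAlgebra

section TwoSidedOrbit

variable {u x : Module.Dual K A}

theorem conv_mem_twoSidedOrbit_left (w : Module.Dual K A) (hx : x ∈ twoSidedOrbit u) :
    conv w x ∈ twoSidedOrbit u := by
  induction hx using Submodule.span_induction with
  | mem x hx =>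
    obtain ⟨w₁, w₂, rfl⟩ := hx
    rw [← conv_assoc]
    exact Submodule.subset_span ⟨_, _, rfl⟩
  | zero => rw [conv_zero]; exact zero_mem _
  | add x y _ _ hx hy => rw [conv_add]; exact add_mem hx hy
  | smul c x _ hx => rw [conv_smul]; exact Submodule.smul_mem _ c hx

theorem conv_mem_twoSidedOrbit_right (w : Module.Dual K A) (hx : x ∈ twoSidedOrbit u) :
    conv x w ∈ twoSidedOrbit u := by
  induction hx using Submodule.span_induction with
  | mem x hx =>
    obtain ⟨w₁, w₂, rfl⟩ := hx
    rw [conv_assoc, conv_assoc]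
    exact Submodule.subset_span ⟨_, _, rfl⟩
  | zero => rw [zero_conv]; exact zero_mem _
  | add x y _ _ hx hy => rw [add_conv]; exact add_mem hx hy
  | smul c x _ hx => rw [smul_conv]; exact Submodule.smul_mem _ c hx

theorem self_mem_twoSidedOrbit (u : Module.Dual K A) : u ∈ twoSidedOrbit u := by
  have h : conv Coalgebra.counit (conv u Coalgebra.counit) ∈ twoSidedOrbit u :=
    Submodule.subset_span ⟨_, _, rfl⟩
  rwa [conv_counit, counit_conv] at h

theorem twoSidedOrbit_le_of_mem (hx : x ∈ twoSidedOrbit u) :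
    twoSidedOrbit x ≤ twoSidedOrbit u :=
  Submodule.span_le.2 fun _ ⟨w₁, w₂, hy⟩ =>
    hy ▸ conv_mem_twoSidedOrbit_left w₁ (conv_mem_twoSidedOrbit_right w₂ hx)

theorem rightOrbit_le_twoSidedOrbit (u : Module.Dual K A) : rightOrbit u ≤ twoSidedOrbit u :=
  Submodule.span_le.2 fun _ ⟨w, hy⟩ =>
    hy ▸ conv_mem_twoSidedOrbit_right w (self_mem_twoSidedOrbit u)

theorem mem_tildeSet_of_mem_twoSidedOrbit (hu : u ∈ tildeSet K A) (hx : x ∈ twoSidedOrbit u) :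
    x ∈ tildeSet K A :=
  have : FiniteDimensional K (twoSidedOrbit u) := hu
  Submodule.finiteDimensional_of_le (twoSidedOrbit_le_of_mem hx)

theorem conv_mem_tildeSet_left (w : Module.Dual K A) (hu : u ∈ tildeSet K A) :
    conv w u ∈ tildeSet K A :=
  mem_tildeSet_of_mem_twoSidedOrbit hu (conv_mem_twoSidedOrbit_left w (self_mem_twoSidedOrbit u))

theorem conv_mem_tildeSet_right (w : Module.Dual K A) (hu : u ∈ tildeSet K A) :
    conv u w ∈ tildeSet K A :=
  mem_tildeSet_of_mem_twoSidedOrbit hu (conv_mem_twoSidedOrbit_right w (self_mem_twoSidedOrbit u))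

theorem smul_mem_tildeSet (c : K) (hu : u ∈ tildeSet K A) : c • u ∈ tildeSet K A :=
  mem_tildeSet_of_mem_twoSidedOrbit hu (Submodule.smul_mem _ c (self_mem_twoSidedOrbit u))

end TwoSidedOrbit

theorem LinearMap.trace_restrict_eq_of_le {V : Type*} [AddCommGroup V] [Module K V]
    (f : V →ₗ[K] V) {W' W : Submodule K V} [FiniteDimensional K W] (hle : W' ≤ W)
    (hW' : Set.MapsTo f W' W') (hW : Set.MapsTo f W W) (himg : Set.MapsTo f W W') :
    trace K W (f.restrict hW) = trace K W' (f.restrict hW') := by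
  have : FiniteDimensional K W' := Submodule.finiteDimensional_of_le hle
  let g : W →ₗ[K] W' := f.restrict himg
  let i : W' →ₗ[K] W := Submodule.inclusion hle
  calc trace K W (f.restrict hW) = trace K W (i ∘ₗ g) := rfl
    _ = trace K W' (g ∘ₗ i) := LinearMap.trace_comp_comm' g i
    _ = trace K W' (f.restrict hW') := rfl

theorem LinearMap.trace_restrict_eq_mul_finrank {V : Type*} [AddCommGroup V] [Module K V]
    (f : V →ₗ[K] V) {W : Submodule K V} [FiniteDimensional K W] (hW : Set.MapsTo f W W) {c : K}
    (hf : ∀ x ∈ W, f x = c • x) : trace K W (f.restrict hW) = c * Module.finrank K W := by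
  have hrestrict : f.restrict hW = c • LinearMap.id :=
    LinearMap.ext fun x => Subtype.ext (hf x x.2)
  rw [hrestrict, map_smul, LinearMap.trace_id, smul_eq_mul]

theorem convTrace_eq_trace_restrict {u : Module.Dual K A} {W : Submodule K (Module.Dual K A)}
    [FiniteDimensional K W] (hle : rightOrbit u ≤ W) (hW : Set.MapsTo (convL u) W W) :
    convTrace u = LinearMap.trace K W ((convL u).restrict hW) :=
  ((convL u).trace_restrict_eq_of_le hle (rightOrbit_mapsTo u) hW
    fun x _ => Submodule.subset_span ⟨x, rfl⟩).symm

theorem convTrace_conv_comm {u : Module.Dual K A} (hu : u ∈ tildeSet K A) (w : Module.Dual K A) :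
    convTrace (conv u w) = convTrace (conv w u) := by
  have : FiniteDimensional K (twoSidedOrbit u) := hu
  have hmaps : ∀ v : Module.Dual K A, Set.MapsTo (convL v) (twoSidedOrbit u) (twoSidedOrbit u) :=
    fun v _ hx => conv_mem_twoSidedOrbit_left v hx
  have hle : ∀ {v}, v ∈ twoSidedOrbit u → rightOrbit v ≤ twoSidedOrbit u :=
    fun hv => (rightOrbit_le_twoSidedOrbit _).trans (twoSidedOrbit_le_of_mem hv)
  have hrestrict : ∀ v v' : Module.Dual K A, (convL (conv v v')).restrict (hmaps _) =
      (convL v).restrict (hmaps v) * (convL v').restrict (hmaps v') := by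
    intro v v'
    refine LinearMap.ext fun x => Subtype.ext ?_
    exact conv_assoc v v' x
  rw [convTrace_eq_trace_restrict (hle (conv_mem_twoSidedOrbit_right w
      (self_mem_twoSidedOrbit u))) (hmaps _),
    convTrace_eq_trace_restrict (hle (conv_mem_twoSidedOrbit_left w
      (self_mem_twoSidedOrbit u))) (hmaps _),
    hrestrict, hrestrict, LinearMap.trace_mul_comm]

theorem rightOrbit_eq_span_singleton {u : Module.Dual K A} (h : ∀ w, conv u w = w 1 • u) :
    rightOrbit u = K ∙ u := by
  refine le_antisymm (Submodule.span_le.2 fun _ ⟨w, hx⟩ => ?_) ?_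
  · rw [hx, h]
    exact Submodule.smul_mem _ _ (Submodule.mem_span_singleton_self u)
  · rw [Submodule.span_singleton_le_iff_mem]
    exact Submodule.subset_span ⟨Coalgebra.counit, (conv_counit u).symm⟩

theorem convTrace_eq_apply_one {u : Module.Dual K A} (h : ∀ w, conv u w = w 1 • u) :
    convTrace u = u 1 := by
  have : FiniteDimensional K (rightOrbit u) := by
    rw [rightOrbit_eq_span_singleton h]
    infer_instance
  have hact : ∀ x ∈ rightOrbit u, convL u x = u 1 • x := by
    intro x hx
    rw [rightOrbit_eq_span_singleton h] at hx
    obtain ⟨c, rfl⟩ := Submodule.mem_span_singleton.1 hx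
    change conv u (c • u) = u 1 • c • u
    rw [conv_smul, h, smul_comm]
  calc convTrace u = u 1 * Module.finrank K (rightOrbit u) :=
        LinearMap.trace_restrict_eq_mul_finrank _ _ hact
    _ = u 1 := by
        rw [rightOrbit_eq_span_singleton h]
        rcases eq_or_ne u 0 with rfl | hu
        · simp
        · rw [finrank_span_singleton hu, Nat.cast_one, mul_one]

theorem eq_smul_of_convTrace_conv_eq
    (hinj : ∀ u ∈ tildeSet K A, ∀ v ∈ tildeSet K A,
      (∀ w : Module.Dual K A, convTrace (conv w u) = convTrace (conv w v)) → u = v)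
    {w₀ : Module.Dual K A} (hw₀ : w₀ ∈ tildeSet K A)
    (hφ : ∀ w : Module.Dual K A, convTrace (conv w w₀) = w 1)
    {u : Module.Dual K A} (hu : u ∈ tildeSet K A) (c : K)
    (h : ∀ w : Module.Dual K A, convTrace (conv w u) = c * w 1) : u = c • w₀ :=
  hinj u hu (c • w₀) (smul_mem_tildeSet c hw₀) fun w => by
    rw [h, conv_smul, ← smul_conv, hφ, LinearMap.smul_apply, smul_eq_mul]

/-- If the polarity `φ : Ã → A**` is injective and `φ(w₀) = ι(1)` for some `w₀ ∈ Ã`, then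
`w₀` is (left and right) invariant, `tr(w * w₀) = w(1) w₀(1)`, `w₀(1) = 1`; hence `w₀` is a
normalized invariant integral and `G = Spec A` is linearly semisimple. -/
theorem integral_of_polarity_injective_and_one_in_image
    (hinj : ∀ u ∈ tildeSet K A, ∀ v ∈ tildeSet K A,
      (∀ w : Module.Dual K A, convTrace (conv w u) = convTrace (conv w v)) → u = v)
    (w₀ : Module.Dual K A) (hw₀ : w₀ ∈ tildeSet K A)
    (hφ : ∀ w : Module.Dual K A, convTrace (conv w w₀) = w 1) :
    (∀ w : Module.Dual K A, conv w w₀ = w 1 • w₀ ∧ conv w₀ w = w 1 • w₀) ∧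
    (∀ w : Module.Dual K A, convTrace (conv w w₀) = w 1 * w₀ 1) ∧
    w₀ 1 = 1 ∧
    IsNormalizedIntegral w₀ := by
  have left_inv (w) : conv w w₀ = w 1 • w₀ :=
    eq_smul_of_convTrace_conv_eq hinj hw₀ hφ (conv_mem_tildeSet_left w hw₀) (w 1) fun w' => by
      rw [← conv_assoc, hφ, conv_apply_one, mul_comm]
  have right_inv (w) : conv w₀ w = w 1 • w₀ :=
    eq_smul_of_convTrace_conv_eq hinj hw₀ hφ (conv_mem_tildeSet_right w hw₀) (w 1) fun w' => by
      rw [← conv_assoc, convTrace_conv_comm (conv_mem_tildeSet_left w' hw₀), ← conv_assoc, hφ,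
        conv_apply_one]
  have trace_w₀ : convTrace w₀ = 1 := by
    simpa only [counit_conv, Bialgebra.counit_one] using hφ Coalgebra.counit
  have hw₀_one : w₀ 1 = 1 := (convTrace_eq_apply_one right_inv).symm.trans trace_w₀
  have invariant (w) : conv w w₀ = w 1 • w₀ ∧ conv w₀ w = w 1 • w₀ := ⟨left_inv w, right_inv w⟩
  exact ⟨invariant, fun w => by rw [hφ, hw₀_one, mul_one], hw₀_one, hw₀_one, invariant⟩

end
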